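/- arXiv:2001.02583 — 2 statements merged into one kernel-verified Lean document; each statement's English description precedes it below -/
import Mathlib

section
/- Let z ∈ (0, 1], let ν ∈ ℝ satisfy z² ≤ ν ≤ 1, and set the boundary quadrature weight h₀ := (1 − z + ν/z)/2. Let Φ : ℤ → ℝ be square-summable over j ≤ 0 and satisfy the second-order extrapolation condition (ΔΦ)₀ = 0, i.e. Φ₁ = 2Φ₀ − Φ_{−1}. Define Ψ_j := (A(z)Φ)_j for j ≤ 0. Then ∑_{j ≤ −1} Ψ_j² + h₀·Ψ₀² ≤ ∑_{j ≤ −1} Φ_j² + h₀·Φ₀² − z·(Φ₀ − (z/2)(Φ₀ − Φ_{−1}))² − (z³/4)·(Φ₀ − Φ_{−1})². In particular the weighted norm with weight h₀ at j = 0 is non-increasing. -/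
/-!
Write the scheme as `Ψ_j = Φ_j + a DΦ_{j+1} - b DΦ_j` with `a = (ν - z)/2`, `b = (ν + z)/2`.
Expanding the square gives `Ψ_j² = Φ_j² + (F_{j+1} - F_j) - q(DΦ_{j+1}, DΦ_j)` with the flux
`F_j = a Φ_j² - b Φ_{j-1}²` and a quadratic form `q` whose cross term `2ab xy` is bounded below
by `-|ab| (x² + y²)`. Summed over `j ≤ -1` the flux telescopes to `F_0`, and since
`(|a| + |b|)² = max(ν², z²) ≤ ν = a + b` the dissipation is at least `(a(1 - a) - |ab|) (DΦ₀)²`.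
The extrapolation condition makes `Ψ₀ = Φ₀ - z DΦ₀`, and the weight `h₀` is exactly the one for
which the boundary terms left over combine into a nonnegative multiple of `(DΦ₀)²`.
-/

/-- Backward difference `(DΦ)_j = Φ_j - Φ_{j-1}`. -/
noncomputable def Dd (Φ : ℤ → ℝ) (j : ℤ) : ℝ := Φ j - Φ (j - 1)

/-- Centered difference `(D₀Φ)_j = (Φ_{j+1} - Φ_{j-1})/2`. -/
noncomputable def D0 (Φ : ℤ → ℝ) (j : ℤ) : ℝ := (Φ (j + 1) - Φ (j - 1)) / 2

/-- Discrete Laplacian `(ΔΦ)_j = Φ_{j-1} - 2Φ_j + Φ_{j+1}`. -/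
noncomputable def Lap (Φ : ℤ → ℝ) (j : ℤ) : ℝ := Φ (j - 1) - 2 * Φ j + Φ (j + 1)

/-- The three point scheme `A(z)Φ = Φ - z D₀Φ + (ν/2) ΔΦ`. -/
noncomputable def A3 (z ν : ℝ) (Φ : ℤ → ℝ) (j : ℤ) : ℝ :=
  Φ j - z * D0 Φ j + ν / 2 * Lap Φ j

theorem Summable.sq_sub {ι : Type*} {f g : ι → ℝ} (hf : Summable fun i ↦ f i ^ 2)
    (hg : Summable fun i ↦ g i ^ 2) : Summable fun i ↦ (f i - g i) ^ 2 :=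
  ((hf.add hg).mul_left 2).of_nonneg_of_le (fun _ ↦ sq_nonneg _)
    fun i ↦ by nlinarith [sq_nonneg (f i + g i)]

theorem Summable.mul_of_summable_sq {ι : Type*} {f g : ι → ℝ} (hf : Summable fun i ↦ f i ^ 2)
    (hg : Summable fun i ↦ g i ^ 2) : Summable fun i ↦ f i * g i :=
  ((hf.add hg).div_const 2).of_norm_bounded fun i ↦ by
    rw [Real.norm_eq_abs, abs_mul, ← sq_abs (f i), ← sq_abs (g i)]
    nlinarith [two_mul_le_add_sq |f i| |g i|]

theorem Summable.tsum_sub_add_one {F : ℕ → ℝ} (hF : Summable F) :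
    ∑' n, (F n - F (n + 1)) = F 0 := by
  rw [hF.tsum_sub ((summable_nat_add_iff 1).2 hF), hF.tsum_eq_zero_add, add_sub_cancel_right]

theorem mul_sq_le_tsum_add_shift {d : ℕ → ℝ} {α β : ℝ} (hd : Summable fun n ↦ d n ^ 2)
    (hαβ : 0 ≤ α + β) : α * d 0 ^ 2 ≤ ∑' n, (α * d n ^ 2 + β * d (n + 1) ^ 2) := by
  have hd₁ : Summable fun n ↦ d (n + 1) ^ 2 := (summable_nat_add_iff 1).2 hd
  rw [(hd.mul_left α).tsum_add (hd₁.mul_left β), tsum_mul_left, tsum_mul_left,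
    hd.tsum_eq_zero_add]
  nlinarith [(tsum_nonneg fun n ↦ sq_nonneg (d (n + 1)) : 0 ≤ ∑' n, d (n + 1) ^ 2)]

theorem neg_abs_mul_add_sq_le (c u v : ℝ) : -|c| * (u ^ 2 + v ^ 2) ≤ 2 * c * u * v := by
  rcases abs_cases c with ⟨hc, -⟩ | ⟨hc, -⟩ <;> rw [hc] <;>
    nlinarith [mul_nonneg (abs_nonneg c) (sq_nonneg (u - v)),
      mul_nonneg (abs_nonneg c) (sq_nonneg (u + v))]

/-- With `x n` standing for `Φ_{-n}`, `threePoint a b x n` is the update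
`Φ_j + a (Φ_{j+1} - Φ_j) - b (Φ_j - Φ_{j-1})` at `j = -1 - n`. -/
def threePoint (a b : ℝ) (x : ℕ → ℝ) (n : ℕ) : ℝ :=
  x (n + 1) + a * (x n - x (n + 1)) - b * (x (n + 1) - x (n + 2))

theorem threePoint_sq (a b : ℝ) (x : ℕ → ℝ) (n : ℕ) :
    threePoint a b x n ^ 2 = x (n + 1) ^ 2
      + ((a * x n ^ 2 - b * x (n + 1) ^ 2) - (a * x (n + 1) ^ 2 - b * x (n + 2) ^ 2))
      - (a * (1 - a) * (x n - x (n + 1)) ^ 2 + b * (1 - b) * (x (n + 1) - x (n + 2)) ^ 2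
        + 2 * (a * b) * (x n - x (n + 1)) * (x (n + 1) - x (n + 2))) := by
  unfold threePoint
  ring

theorem tsum_threePoint_sq_le {a b : ℝ} (hab : (|a| + |b|) ^ 2 ≤ a + b) {x : ℕ → ℝ}
    (hx : Summable fun n ↦ x n ^ 2) :
    ∑' n, threePoint a b x n ^ 2 ≤ ∑' n, x (n + 1) ^ 2 + (a * x 0 ^ 2 - b * x 1 ^ 2)
      - (a * (1 - a) - |a * b|) * (x 0 - x 1) ^ 2 := by
  set d : ℕ → ℝ := fun n ↦ x n - x (n + 1)
  set F : ℕ → ℝ := fun n ↦ a * x n ^ 2 - b * x (n + 1) ^ 2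
  set q : ℕ → ℝ := fun n ↦ a * (1 - a) * d n ^ 2 + b * (1 - b) * d (n + 1) ^ 2
    + 2 * (a * b) * d n * d (n + 1)
  have hx₁ : Summable fun n ↦ x (n + 1) ^ 2 := (summable_nat_add_iff 1).2 hx
  have hd : Summable fun n ↦ d n ^ 2 := hx.sq_sub hx₁
  have hd₁ : Summable fun n ↦ d (n + 1) ^ 2 := (summable_nat_add_iff 1).2 hd
  have hF : Summable F := (hx.mul_left a).sub (hx₁.mul_left b)
  have hq : Summable q :=
    ((hd.mul_left _).add (hd₁.mul_left _)).add
      (((hd.mul_of_summable_sq hd₁).mul_left (2 * (a * b))).congr fun n ↦ by simp only [mul_assoc])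
  have henergy : ∑' n, threePoint a b x n ^ 2 = ∑' n, x (n + 1) ^ 2 + F 0 - ∑' n, q n := by
    have hF' : Summable fun n ↦ F n - F (n + 1) := hF.sub ((summable_nat_add_iff 1).2 hF)
    rw [tsum_congr (threePoint_sq a b x), (hx₁.add hF').tsum_sub hq, hx₁.tsum_add hF',
      hF.tsum_sub_add_one]
  have hdissipation : (a * (1 - a) - |a * b|) * d 0 ^ 2 ≤ ∑' n, q n := by
    refine (mul_sq_le_tsum_add_shift (β := b * (1 - b) - |a * b|) hd ?_).trans
      (((hd.mul_left _).add (hd₁.mul_left _)).tsum_le_tsum (fun n ↦ ?_) hq)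
    · rw [abs_mul]
      nlinarith [sq_abs a, sq_abs b, le_abs_self a, le_abs_self b]
    · nlinarith [neg_abs_mul_add_sq_le (a * b) (d n) (d (n + 1))]
  linarith

def natEquivIntLe (m : ℤ) : ℕ ≃ {j : ℤ // j ≤ m} where
  toFun n := ⟨m - n, by omega⟩
  invFun j := (m - j).toNat
  left_inv n := by simp
  right_inv j := Subtype.ext (by have := j.2; simp; omega)

theorem abs_add_abs_sq_le {z ν : ℝ} (hz : 0 < z) (h1 : z ^ 2 ≤ ν) (h2 : ν ≤ 1) :
    (|(ν - z) / 2| + |(ν + z) / 2|) ^ 2 ≤ (ν - z) / 2 + (ν + z) / 2 := by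
  rw [abs_of_pos (by nlinarith : 0 < (ν + z) / 2)]
  rcases le_total z ν with h | h
  · rw [abs_of_nonneg (by linarith)]; nlinarith
  · rw [abs_of_nonpos (by linarith)]; nlinarith

theorem boundary_energy_le {z ν : ℝ} (hz : 0 < z) (h1 : z ^ 2 ≤ ν) (h2 : ν ≤ 1) (x₀ x₁ : ℝ) :
    (1 - z + ν / z) / 2 * (x₀ - z * (x₀ - x₁)) ^ 2 + ((ν - z) / 2 * x₀ ^ 2 - (ν + z) / 2 * x₁ ^ 2)
      - ((ν - z) / 2 * (1 - (ν - z) / 2) - |(ν - z) / 2 * ((ν + z) / 2)|) * (x₀ - x₁) ^ 2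
    ≤ (1 - z + ν / z) / 2 * x₀ ^ 2 - z * (x₀ - z / 2 * (x₀ - x₁)) ^ 2
      - z ^ 3 / 4 * (x₀ - x₁) ^ 2 := by
  set c := |(ν - z) / 2 * ((ν + z) / 2)| with hc
  have hcoef : 0 ≤ (1 - z) * ((ν + z) / 2) + ((ν - z) / 2 * (1 - (ν - z) / 2) - c) := by
    rcases le_total z ν with h | h
    · rw [hc, abs_of_nonneg (by nlinarith)]; nlinarith
    · rw [hc, abs_of_nonpos (by nlinarith)]; nlinarith
  have hid : (1 - z + ν / z) / 2 * x₀ ^ 2 - z * (x₀ - z / 2 * (x₀ - x₁)) ^ 2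
      - z ^ 3 / 4 * (x₀ - x₁) ^ 2 - ((1 - z + ν / z) / 2 * (x₀ - z * (x₀ - x₁)) ^ 2
        + ((ν - z) / 2 * x₀ ^ 2 - (ν + z) / 2 * x₁ ^ 2)
        - ((ν - z) / 2 * (1 - (ν - z) / 2) - c) * (x₀ - x₁) ^ 2)
      = ((1 - z) * ((ν + z) / 2) + ((ν - z) / 2 * (1 - (ν - z) / 2) - c)) * (x₀ - x₁) ^ 2 := by
    field_simp
    ring
  exact sub_nonneg.1 (hid ▸ mul_nonneg hcoef (sq_nonneg (x₀ - x₁)))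

theorem three_point_second_order_extrapolation_general (z ν : ℝ)
    (hz0 : 0 < z) (h1 : z ^ 2 ≤ ν) (h2 : ν ≤ 1)
    (Φ : ℤ → ℝ) (hΦ : Summable (fun j : {j : ℤ // j ≤ 0} => (Φ j.1) ^ 2))
    (hext : Φ 1 = 2 * Φ 0 - Φ (-1)) :
    (∑' j : {j : ℤ // j ≤ -1}, (A3 z ν Φ j.1) ^ 2)
        + (1 - z + ν / z) / 2 * (A3 z ν Φ 0) ^ 2
      ≤ (∑' j : {j : ℤ // j ≤ -1}, (Φ j.1) ^ 2) + (1 - z + ν / z) / 2 * (Φ 0) ^ 2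
        - z * (Φ 0 - z / 2 * (Φ 0 - Φ (-1))) ^ 2
        - z ^ 3 / 4 * (Φ 0 - Φ (-1)) ^ 2 := by
  let x : ℕ → ℝ := fun n ↦ Φ (-n)
  have hx : Summable fun n ↦ x n ^ 2 := by
    simpa [Function.comp_def, natEquivIntLe, x] using (natEquivIntLe 0).summable_iff.2 hΦ
  have hinterior : ∑' j : {j : ℤ // j ≤ -1}, A3 z ν Φ j ^ 2
      = ∑' n, threePoint ((ν - z) / 2) ((ν + z) / 2) x n ^ 2 := by
    rw [← (natEquivIntLe (-1)).tsum_eq]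
    refine tsum_congr fun n ↦ ?_
    simp only [natEquivIntLe, Equiv.coe_fn_mk, A3, D0, Lap, threePoint, x]
    push_cast
    ring_nf
  have hsquares : ∑' j : {j : ℤ // j ≤ -1}, Φ j ^ 2 = ∑' n, x (n + 1) ^ 2 := by
    rw [← (natEquivIntLe (-1)).tsum_eq]
    refine tsum_congr fun n ↦ ?_
    simp only [natEquivIntLe, Equiv.coe_fn_mk, x]
    push_cast
    ring_nf
  have hA0 : A3 z ν Φ 0 = Φ 0 - z * (Φ 0 - Φ (-1)) := by
    simp only [A3, D0, Lap, zero_add, zero_sub, hext]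
    ring
  have hx0 : x 0 = Φ 0 := by simp [x]
  have hx1 : x 1 = Φ (-1) := by simp [x]
  have henergy := tsum_threePoint_sq_le (abs_add_abs_sq_le hz0 h1 h2) hx
  rw [hx0, hx1] at henergy
  rw [hinterior, hsquares, hA0]
  linarith [boundary_energy_le hz0 h1 h2 (Φ 0) (Φ (-1))]

/-- Semi-boundedness of the three point scheme with second order extrapolation
`(ΔΦ)₀ = 0` at the outflow boundary, for the weighted norm with weight
`h₀ = (1 - z + ν/z)/2` at `j = 0`. -/
theorem three_point_second_order_extrapolation (z ν : ℝ)
    (hz0 : 0 < z) (hz1 : z ≤ 1) (h1 : z ^ 2 ≤ ν) (h2 : ν ≤ 1)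
    (Φ : ℤ → ℝ) (hΦ : Summable (fun j : {j : ℤ // j ≤ 0} => (Φ j.1) ^ 2))
    (hext : Φ 1 = 2 * Φ 0 - Φ (-1)) :
    (∑' j : {j : ℤ // j ≤ -1}, (A3 z ν Φ j.1) ^ 2)
        + (1 - z + ν / z) / 2 * (A3 z ν Φ 0) ^ 2
      ≤ (∑' j : {j : ℤ // j ≤ -1}, (Φ j.1) ^ 2) + (1 - z + ν / z) / 2 * (Φ 0) ^ 2
        - z * (Φ 0 - z / 2 * (Φ 0 - Φ (-1))) ^ 2
        - z ^ 3 / 4 * (Φ 0 - Φ (-1)) ^ 2 :=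
  three_point_second_order_extrapolation_general z ν hz0 h1 h2 Φ hΦ hext
end

section
/- Let z ∈ (0, 1) and take the five-point scheme with σ = z(1 − z²)/6 and τ = −σ/2. Let Φ : ℤ → ℝ be square-summable over j ≤ 0 and satisfy the type-2 second-order extrapolation conditions (ΔΦ)₀ = 0 and (Δ²Φ)₀ = 0, where the ghost value Φ₁ is fixed by (ΔΦ)₀ = 0 and then Φ₂ is fixed by (Δ²Φ)₀ = 0. Define Ψ_j := (A(z)Φ)_j for j ≤ 0. Then ∑_{j ≤ −1} Ψ_j² + (1/2)·Ψ₀² ≤ ∑_{j ≤ −1} Φ_j² + (1/2)·Φ₀²; that is, the scheme with this boundary closure is semi-bounded for the weighted norm with weight 1/2 at j = 0. -/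
/-- `(DΔΦ)_j = (ΔΦ)_j - (ΔΦ)_{j-1}`. -/
noncomputable def DLap (Φ : ℤ → ℝ) (j : ℤ) : ℝ := Lap Φ j - Lap Φ (j - 1)

/-- `(D₀ΔΦ)_j = (-Φ_{j-2} + 2Φ_{j-1} - 2Φ_{j+1} + Φ_{j+2})/2`. -/
noncomputable def D0Lap (Φ : ℤ → ℝ) (j : ℤ) : ℝ :=
  (-Φ (j - 2) + 2 * Φ (j - 1) - 2 * Φ (j + 1) + Φ (j + 2)) / 2

/-- `(Δ²Φ)_j = Φ_{j-2} - 4Φ_{j-1} + 6Φ_j - 4Φ_{j+1} + Φ_{j+2}`. -/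
noncomputable def Lap2 (Φ : ℤ → ℝ) (j : ℤ) : ℝ :=
  Φ (j - 2) - 4 * Φ (j - 1) + 6 * Φ j - 4 * Φ (j + 1) + Φ (j + 2)

/-- The five point scheme `A(z)Φ = Φ - z D₀Φ + (z²/2) ΔΦ + σ D₀ΔΦ + τ Δ²Φ`. -/
noncomputable def A5 (z σ τ : ℝ) (Φ : ℤ → ℝ) (j : ℤ) : ℝ :=
  Φ j - z * D0 Φ j + z ^ 2 / 2 * Lap Φ j + σ * D0Lap Φ j + τ * Lap2 Φ j

/-- The specialized scheme. -/
noncomputable def Psi (z : ℝ) (Φ : ℤ → ℝ) (j : ℤ) : ℝ :=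
  A5 z (z * (1 - z ^ 2) / 6) (-(z * (1 - z ^ 2) / 6) / 2) Φ j

/-- Telescoping boundary functional. -/
noncomputable def gfun (z a b c : ℝ) : ℝ :=
  (-(1/12)*z^2 + (1/12)*z^3 + (1/12)*z^4 - (1/12)*z^5) * a^2
  + ((2/3)*z^2 - (1/3)*z^3 - (2/3)*z^4 + (1/3)*z^5) * (a*b)
  + ((1/3)*z - (1/2)*z^2 - (1/6)*z^3 + (1/2)*z^4 - (1/6)*z^5) * (a*c)
  + (-(1/6)*z - (3/2)*z^2 + z^4 - (1/3)*z^5) * b^2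
  + (-(4/3)*z + (4/3)*z^2 + z^3 - (4/3)*z^4 + (1/3)*z^5) * (b*c)
  + ((1/6)*z + (1/12)*z^2 - (7/12)*z^3 + (5/12)*z^4 - (1/12)*z^5) * c^2

lemma A5_expand (z σ τ : ℝ) (Φ : ℤ → ℝ) (j : ℤ) :
    A5 z σ τ Φ j
      = Φ j - z * ((Φ (j + 1) - Φ (j - 1)) / 2)
        + z ^ 2 / 2 * (Φ (j - 1) - 2 * Φ j + Φ (j + 1))
        + σ * ((-Φ (j - 2) + 2 * Φ (j - 1) - 2 * Φ (j + 1) + Φ (j + 2)) / 2)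
        + τ * (Φ (j - 2) - 4 * Φ (j - 1) + 6 * Φ j - 4 * Φ (j + 1) + Φ (j + 2)) := rfl

lemma DLap_expand (Φ : ℤ → ℝ) (j : ℤ) :
    DLap Φ j = -Φ (j - 2) + 3 * Φ (j - 1) - 3 * Φ j + Φ (j + 1) := by
  simp only [DLap, Lap]
  have h1 : j - 1 - 1 = j - 2 := by ring
  have h2 : j - 1 + 1 = j := by ring
  rw [h1, h2]; ring

lemma Psi_four (z : ℝ) (Φ : ℤ → ℝ) (j : ℤ) :
    Psi z Φ j
      = (-(z*(1-z^2)/6)) * Φ (j-2) + (z/2 + z^2/2 + z*(1-z^2)/2) * Φ (j-1)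
        + (1 - z^2 - z*(1-z^2)/2) * Φ j + (-z/2 + z^2/2 + z*(1-z^2)/6) * Φ (j+1) := by
  show A5 _ _ _ _ _ = _
  rw [A5_expand]; ring

lemma local_id (z : ℝ) (Φ : ℤ → ℝ) (j : ℤ) :
    Φ j ^ 2 - Psi z Φ j ^ 2
      = z*(1-z^2)*(2-z)/12 * (Lap Φ j)^2
        + z^2*(1-z)*(2-z)*(1-z^2)/36 * (DLap Φ j)^2
        + gfun z (Φ (j-2)) (Φ (j-1)) (Φ j) - gfun z (Φ (j-1)) (Φ j) (Φ (j+1)) := by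
  show Φ j ^ 2 - A5 z (z * (1 - z ^ 2) / 6) (-(z * (1 - z ^ 2) / 6) / 2) Φ j ^ 2 = _
  rw [A5_expand, DLap_expand]
  simp only [Lap, gfun]
  ring

lemma four_sq (A B C D : ℝ) : (A+B+C+D)^2 ≤ 4*(A^2+B^2+C^2+D^2) := by
  nlinarith [sq_nonneg (A-B), sq_nonneg (A-C), sq_nonneg (A-D), sq_nonneg (B-C),
    sq_nonneg (B-D), sq_nonneg (C-D)]

set_option maxHeartbeats 2000000 in
lemma boundary_core (z a b c d : ℝ) (hz0 : 0 < z) (hz1 : z < 1) :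
    0 ≤ z*(1-z^2)*(2-z)/12 * (b - 2*c + d)^2
      + z^2*(1-z)*(2-z)*(1-z^2)/36 * (-a + 3*b - 3*c + d)^2
      + 1/2*(d^2 - (d - z*((2*d-c) - c)/2 + z^2/2*(c - 2*d + (2*d-c))
          + (z*(1-z^2)/6)*((-b + 2*c - 2*(2*d-c) + (2*d-b))/2)
          + (-(z*(1-z^2)/6)/2)*(b - 4*c + 6*d - 4*(2*d-c) + (2*d-b)))^2)
      - gfun z b c d := by
  have h1z : (0:ℝ) < 1 - z := by linarith
  have h2z : (0:ℝ) < 1 + z := by linarith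
  have h3z : (0:ℝ) < 2 - z := by linarith
  have h12 : (0:ℝ) < 1 - z^2 := by nlinarith
  have hp1 : (0:ℝ) < 12 - z - 6*z^2 + z^3 := by nlinarith
  have hp2 : (0:ℝ) < 12 - z + 15*z^2 - z^3 - 9*z^4 + 2*z^5 := by nlinarith
  have hp3 : (0:ℝ) < 23 - 2*z - z^2 + z^3 - 4*z^4 + z^5 := by nlinarith
  have hm1 : (0:ℝ) < z*(1-z)*(1+z)*(12-z-6*z^2+z^3)/72 :=
    div_pos (mul_pos (mul_pos (mul_pos hz0 h1z) h2z) hp1) (by norm_num)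
  have hm2 : (0:ℝ) < z^2*(1-z)*(1+z)*(12-z+15*z^2-z^3-9*z^4+2*z^5)/432 :=
    div_pos (mul_pos (mul_pos (mul_pos (pow_pos hz0 2) h1z) h2z) hp2) (by norm_num)
  have hm3 : (0:ℝ) < z^3*(1-z)*(1+z)*(23-2*z-z^2+z^3-4*z^4+z^5)/864 :=
    div_pos (mul_pos (mul_pos (mul_pos (pow_pos hz0 3) h1z) h2z) hp3) (by norm_num)
  have hc3 : (0:ℝ) ≤ z^2*(1-z)*(2-z)*(1-z^2)/36 :=
    le_of_lt (div_pos (mul_pos (mul_pos (mul_pos (pow_pos hz0 2) h1z) h3z) h12) (by norm_num))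
  set L1 : ℝ := ((1/6)*z - (1/72)*z^2 - (1/4)*z^3 + (1/36)*z^4 + (1/12)*z^5 - (1/72)*z^6) * b
      + (-(1/3)*z - (1/18)*z^2 + (1/2)*z^3 + (1/36)*z^4 - (1/6)*z^5 + (1/36)*z^6) * c
      + ((1/12)*z + (5/72)*z^2 - (1/6)*z^3 - (1/18)*z^4 + (1/12)*z^5 - (1/72)*z^6) * d with hL1
  set L2 : ℝ := ((1/36)*z^2 - (1/432)*z^3 + (1/144)*z^4 - (1/18)*z^6 + (1/144)*z^7 + (1/48)*z^8 - (1/216)*z^9) * c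
      + (-(1/36)*z^2 + (17/216)*z^3 - (1/72)*z^4 - (1/9)*z^5 + (5/72)*z^6 + (1/36)*z^7 - (1/36)*z^8 + (1/216)*z^9) * d with hL2
  have key : (z*(1-z)*(1+z)*(12-z-6*z^2+z^3)/72) * (z^2*(1-z)*(1+z)*(12-z+15*z^2-z^3-9*z^4+2*z^5)/432)
        * (z*(1-z^2)*(2-z)/12 * (b - 2*c + d)^2
          + 1/2*(d^2 - (d - z*((2*d-c) - c)/2 + z^2/2*(c - 2*d + (2*d-c))
              + (z*(1-z^2)/6)*((-b + 2*c - 2*(2*d-c) + (2*d-b))/2)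
              + (-(z*(1-z^2)/6)/2)*(b - 4*c + 6*d - 4*(2*d-c) + (2*d-b)))^2)
          - gfun z b c d)
      = (z^2*(1-z)*(1+z)*(12-z+15*z^2-z^3-9*z^4+2*z^5)/432) * L1^2 + L2^2
        + (z*(1-z)*(1+z)*(12-z-6*z^2+z^3)/72) * (z^3*(1-z)*(1+z)*(23-2*z-z^2+z^3-4*z^4+z^5)/864) * d^2 := by
    rw [hL1, hL2]; simp only [gfun]; ring
  have hRHS : (0:ℝ) ≤ (z^2*(1-z)*(1+z)*(12-z+15*z^2-z^3-9*z^4+2*z^5)/432) * L1^2 + L2^2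
        + (z*(1-z)*(1+z)*(12-z-6*z^2+z^3)/72) * (z^3*(1-z)*(1+z)*(23-2*z-z^2+z^3-4*z^4+z^5)/864) * d^2 :=
    add_nonneg (add_nonneg (mul_nonneg hm2.le (sq_nonneg _)) (sq_nonneg _))
      (mul_nonneg (mul_nonneg hm1.le hm3.le) (sq_nonneg _))
  have h0 : (0:ℝ) ≤ (z*(1-z)*(1+z)*(12-z-6*z^2+z^3)/72) * (z^2*(1-z)*(1+z)*(12-z+15*z^2-z^3-9*z^4+2*z^5)/432)
        * (z*(1-z^2)*(2-z)/12 * (b - 2*c + d)^2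
          + 1/2*(d^2 - (d - z*((2*d-c) - c)/2 + z^2/2*(c - 2*d + (2*d-c))
              + (z*(1-z^2)/6)*((-b + 2*c - 2*(2*d-c) + (2*d-b))/2)
              + (-(z*(1-z^2)/6)/2)*(b - 4*c + 6*d - 4*(2*d-c) + (2*d-b)))^2)
          - gfun z b c d) := by rw [key]; exact hRHS
  have hQ := (mul_nonneg_iff_of_pos_left (mul_pos hm1 hm2)).mp h0
  have hq : (0:ℝ) ≤ z^2*(1-z)*(2-z)*(1-z^2)/36 * (-a + 3*b - 3*c + d)^2 :=
    mul_nonneg hc3 (sq_nonneg _)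
  simp only [gfun] at hQ ⊢
  linarith [hQ, hq]

lemma boundary_Phi (z : ℝ) (hz0 : 0 < z) (hz1 : z < 1) (Φ : ℤ → ℝ)
    (hb1 : Φ 1 = 2*Φ 0 - Φ (-1)) (hb2 : Φ 2 = 2*Φ 0 - Φ (-2)) :
    0 ≤ z*(1-z^2)*(2-z)/12 * (Lap Φ (-1))^2 + z^2*(1-z)*(2-z)*(1-z^2)/36 * (DLap Φ (-1))^2
      + 1/2*(Φ 0^2 - Psi z Φ 0^2) - gfun z (Φ (-2)) (Φ (-1)) (Φ 0) := by
  have hc := boundary_core z (Φ (-3)) (Φ (-2)) (Φ (-1)) (Φ 0) hz0 hz1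
  have hL : Lap Φ (-1) = Φ (-2) - 2*Φ (-1) + Φ 0 := by
    simp only [Lap]; norm_num
  have hD : DLap Φ (-1) = -Φ (-3) + 3*Φ (-2) - 3*Φ (-1) + Φ 0 := by
    rw [DLap_expand]; norm_num
  have hP : Psi z Φ 0
      = Φ 0 - z*((2*Φ 0 - Φ (-1)) - Φ (-1))/2 + z^2/2*(Φ (-1) - 2*Φ 0 + (2*Φ 0 - Φ (-1)))
        + (z*(1-z^2)/6)*((-Φ (-2) + 2*Φ (-1) - 2*(2*Φ 0 - Φ (-1)) + (2*Φ 0 - Φ (-2)))/2)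
        + (-(z*(1-z^2)/6)/2)*(Φ (-2) - 4*Φ (-1) + 6*Φ 0 - 4*(2*Φ 0 - Φ (-1)) + (2*Φ 0 - Φ (-2))) := by
    show A5 _ _ _ _ _ = _
    rw [A5_expand]
    norm_num
    rw [hb1, hb2]
    ring
  rw [hL, hD, hP]
  simp only [gfun] at hc ⊢
  linarith [hc]

/-- Enumeration of `{j : ℤ // j ≤ -1}` by `n ↦ -1 - n`. -/
def negSuccEquiv : ℕ ≃ {j : ℤ // j ≤ -1} where
  toFun n := ⟨-1 - (n:ℤ), by omega⟩
  invFun j := (-1 - j.1).toNat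
  left_inv n := by
    show (-1 - (-1 - (n:ℤ))).toNat = n
    omega
  right_inv j := by
    apply Subtype.ext
    show (-1 : ℤ) - (((-1 - j.1).toNat : ℕ) : ℤ) = j.1
    have := j.2
    omega

set_option maxHeartbeats 4000000 in
/-- Semi-boundedness of the five point scheme with `σ = z(1 - z²)/6`, `τ = -σ/2`
under the type-2 second order extrapolation conditions `(ΔΦ)₀ = (Δ²Φ)₀ = 0`. -/
theorem five_point_upwind_like_type2_extrapolation (z : ℝ) (hz : z ∈ Set.Ioo (0 : ℝ) 1)
    (Φ : ℤ → ℝ) (hΦ : Summable (fun j : {j : ℤ // j ≤ 0} => (Φ j.1) ^ 2))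
    (hext1 : Lap Φ 0 = 0) (hext2 : Lap2 Φ 0 = 0) :
    (∑' j : {j : ℤ // j ≤ -1},
        (A5 z (z * (1 - z ^ 2) / 6) (-(z * (1 - z ^ 2) / 6) / 2) Φ j.1) ^ 2)
        + 1 / 2 * (A5 z (z * (1 - z ^ 2) / 6) (-(z * (1 - z ^ 2) / 6) / 2) Φ 0) ^ 2
      ≤ (∑' j : {j : ℤ // j ≤ -1}, (Φ j.1) ^ 2) + 1 / 2 * (Φ 0) ^ 2 := by
  obtain ⟨hz0, hz1⟩ := hz
  show (∑' j : {j : ℤ // j ≤ -1}, (Psi z Φ j.1) ^ 2) + 1 / 2 * (Psi z Φ 0) ^ 2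
      ≤ (∑' j : {j : ℤ // j ≤ -1}, (Φ j.1) ^ 2) + 1 / 2 * (Φ 0) ^ 2
  -- ghost values
  have hext1' : Φ (0-1) - 2 * Φ 0 + Φ (0+1) = 0 := hext1
  have hext2' : Φ (0-2) - 4 * Φ (0-1) + 6 * Φ 0 - 4 * Φ (0+1) + Φ (0+2) = 0 := hext2
  norm_num at hext1' hext2'
  have hb1 : Φ 1 = 2*Φ 0 - Φ (-1) := by linarith
  have hb2 : Φ 2 = 2*Φ 0 - Φ (-2) := by linarith
  -- basic summability of shifted squares
  have hbase : ∀ m : ℤ, m ≤ 0 → Summable (fun n : ℕ => Φ (m - (n:ℤ)) ^ 2) := by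
    intro m hm
    have hinj : Function.Injective (fun n : ℕ => (⟨m - (n:ℤ), by omega⟩ : {j : ℤ // j ≤ 0})) := by
      intro n1 n2 h
      have h' := congrArg Subtype.val h
      simp only at h'
      omega
    have := hΦ.comp_injective hinj
    exact this
  have hφs : Summable (fun n : ℕ => Φ (-1 - (n:ℤ)) ^ 2) := hbase (-1) (by norm_num)
  have s3 : Summable (fun n : ℕ => Φ (-1 - (n:ℤ) - 2) ^ 2) :=
    (hbase (-3) (by norm_num)).congr (fun n => by rw [show (-3 : ℤ) - (n:ℤ) = -1 - (n:ℤ) - 2 by ring])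
  have s2 : Summable (fun n : ℕ => Φ (-1 - (n:ℤ) - 1) ^ 2) :=
    (hbase (-2) (by norm_num)).congr (fun n => by rw [show (-2 : ℤ) - (n:ℤ) = -1 - (n:ℤ) - 1 by ring])
  have s0 : Summable (fun n : ℕ => Φ (-1 - (n:ℤ) + 1) ^ 2) :=
    (hbase 0 (by norm_num)).congr (fun n => by rw [show (0 : ℤ) - (n:ℤ) = -1 - (n:ℤ) + 1 by ring])
  -- summability of the scheme values
  have hψs : Summable (fun n : ℕ => Psi z Φ (-1 - (n:ℤ)) ^ 2) := by
    have hbig : Summable (fun n : ℕ =>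
        4*((-(z*(1-z^2)/6))^2 * Φ (-1 - (n:ℤ) - 2)^2 + (z/2 + z^2/2 + z*(1-z^2)/2)^2 * Φ (-1 - (n:ℤ) - 1)^2
          + (1 - z^2 - z*(1-z^2)/2)^2 * Φ (-1 - (n:ℤ))^2 + (-z/2 + z^2/2 + z*(1-z^2)/6)^2 * Φ (-1 - (n:ℤ) + 1)^2)) :=
      Summable.mul_left 4 ((((s3.mul_left ((-(z*(1-z^2)/6))^2)).add
        (s2.mul_left ((z/2 + z^2/2 + z*(1-z^2)/2)^2))).add
        (hφs.mul_left ((1 - z^2 - z*(1-z^2)/2)^2))).add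
        (s0.mul_left ((-z/2 + z^2/2 + z*(1-z^2)/6)^2)))
    have hbnd : ∀ n : ℕ, Psi z Φ (-1 - (n:ℤ)) ^ 2
        ≤ 4*((-(z*(1-z^2)/6))^2 * Φ (-1 - (n:ℤ) - 2)^2 + (z/2 + z^2/2 + z*(1-z^2)/2)^2 * Φ (-1 - (n:ℤ) - 1)^2
          + (1 - z^2 - z*(1-z^2)/2)^2 * Φ (-1 - (n:ℤ))^2 + (-z/2 + z^2/2 + z*(1-z^2)/6)^2 * Φ (-1 - (n:ℤ) + 1)^2) := by
      intro n
      rw [Psi_four]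
      calc ((-(z*(1-z^2)/6)) * Φ (-1 - (n:ℤ) - 2) + (z/2 + z^2/2 + z*(1-z^2)/2) * Φ (-1 - (n:ℤ) - 1)
            + (1 - z^2 - z*(1-z^2)/2) * Φ (-1 - (n:ℤ)) + (-z/2 + z^2/2 + z*(1-z^2)/6) * Φ (-1 - (n:ℤ) + 1))^2
          ≤ 4*(((-(z*(1-z^2)/6)) * Φ (-1 - (n:ℤ) - 2))^2 + ((z/2 + z^2/2 + z*(1-z^2)/2) * Φ (-1 - (n:ℤ) - 1))^2
            + ((1 - z^2 - z*(1-z^2)/2) * Φ (-1 - (n:ℤ)))^2 + ((-z/2 + z^2/2 + z*(1-z^2)/6) * Φ (-1 - (n:ℤ) + 1))^2) :=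
            four_sq _ _ _ _
        _ = 4*((-(z*(1-z^2)/6))^2 * Φ (-1 - (n:ℤ) - 2)^2 + (z/2 + z^2/2 + z*(1-z^2)/2)^2 * Φ (-1 - (n:ℤ) - 1)^2
            + (1 - z^2 - z*(1-z^2)/2)^2 * Φ (-1 - (n:ℤ))^2 + (-z/2 + z^2/2 + z*(1-z^2)/6)^2 * Φ (-1 - (n:ℤ) + 1)^2) := by
            ring
    exact Summable.of_nonneg_of_le (fun n => sq_nonneg _) hbnd hbig
  -- decay of the boundary functional
  have hto : ∀ m : ℤ, m ≤ 0 → Filter.Tendsto (fun n : ℕ => Φ (m - (n:ℤ))) Filter.atTop (nhds 0) := by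
    intro m hm
    have hsq := (hbase m hm).tendsto_atTop_zero
    have habs : Filter.Tendsto (fun n : ℕ => |Φ (m - (n:ℤ))|) Filter.atTop (nhds 0) := by
      have := (Real.continuous_sqrt.tendsto 0).comp hsq
      simpa only [Function.comp_def, Real.sqrt_sq_eq_abs, Real.sqrt_zero] using this
    exact tendsto_of_tendsto_of_tendsto_of_le_of_le (by simpa using habs.neg) habs
      (fun n => neg_abs_le _) (fun n => le_abs_self _)
  obtain ⟨u, hu_def⟩ : ∃ u : ℕ → ℝ,
      u = fun n : ℕ => gfun z (Φ (-2 - (n:ℤ))) (Φ (-1 - (n:ℤ))) (Φ (0 - (n:ℤ))) :=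
    ⟨fun n : ℕ => gfun z (Φ (-2 - (n:ℤ))) (Φ (-1 - (n:ℤ))) (Φ (0 - (n:ℤ))), rfl⟩
  have hu : Filter.Tendsto u Filter.atTop (nhds 0) := by
    have t2 := hto (-2) (by norm_num)
    have t1 := hto (-1) (by norm_num)
    have t0 := hto 0 (by norm_num)
    have hcont : Continuous (fun p : ℝ × ℝ × ℝ => gfun z p.1 p.2.1 p.2.2) := by
      unfold gfun; fun_prop
    have := (hcont.tendsto (0,0,0)).comp (t2.prodMk_nhds (t1.prodMk_nhds t0))
    simp only [Function.comp] at this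
    have h000 : gfun z 0 0 0 = 0 := by simp [gfun]
    rw [hu_def]
    simpa [h000, Function.comp_def] using this
  -- dissipation terms
  obtain ⟨R, hRdef⟩ : ∃ R : ℕ → ℝ, R = fun n : ℕ => z*(1-z^2)*(2-z)/12 * (Lap Φ (-1 - (n:ℤ)))^2
      + z^2*(1-z)*(2-z)*(1-z^2)/36 * (DLap Φ (-1 - (n:ℤ)))^2 :=
    ⟨fun n : ℕ => z*(1-z^2)*(2-z)/12 * (Lap Φ (-1 - (n:ℤ)))^2
      + z^2*(1-z)*(2-z)*(1-z^2)/36 * (DLap Φ (-1 - (n:ℤ)))^2, rfl⟩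
  have h12 : (0:ℝ) < 1 - z^2 := by nlinarith
  have h1z : (0:ℝ) < 1 - z := by linarith
  have h3z : (0:ℝ) < 2 - z := by linarith
  have hc2 : (0:ℝ) ≤ z*(1-z^2)*(2-z)/12 :=
    le_of_lt (div_pos (mul_pos (mul_pos hz0 h12) h3z) (by norm_num))
  have hc3 : (0:ℝ) ≤ z^2*(1-z)*(2-z)*(1-z^2)/36 :=
    le_of_lt (div_pos (mul_pos (mul_pos (mul_pos (pow_pos hz0 2) h1z) h3z) h12) (by norm_num))
  have hR0 : ∀ n, 0 ≤ R n := by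
    intro n
    rw [hRdef]
    exact add_nonneg (mul_nonneg hc2 (sq_nonneg _)) (mul_nonneg hc3 (sq_nonneg _))
  -- per-site identity
  have site : ∀ n : ℕ, Φ (-1 - (n:ℤ))^2 - Psi z Φ (-1 - (n:ℤ))^2 = R n + (u (n+1) - u n) := by
    intro n
    have h1 : (-2 - ((n+1 : ℕ) : ℤ)) = -1 - (n:ℤ) - 2 := by push_cast; ring
    have h2 : (-1 - ((n+1 : ℕ) : ℤ)) = -1 - (n:ℤ) - 1 := by push_cast; ring
    have h3 : ((0:ℤ) - ((n+1 : ℕ) : ℤ)) = -1 - (n:ℤ) := by push_cast; ring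
    have h4 : (-2 - ((n : ℕ) : ℤ)) = -1 - (n:ℤ) - 1 := by ring
    have h6 : ((0:ℤ) - ((n : ℕ) : ℤ)) = -1 - (n:ℤ) + 1 := by ring
    rw [hRdef, hu_def]
    simp only
    rw [h1, h2, h3, h4, h6]
    linarith [local_id z Φ (-1 - (n:ℤ))]
  -- telescoping finite-sum identity
  have sum_id : ∀ N : ℕ,
      (∑ n ∈ Finset.range N, Φ (-1 - (n:ℤ))^2) - (∑ n ∈ Finset.range N, Psi z Φ (-1 - (n:ℤ))^2)
        = (∑ n ∈ Finset.range N, R n) + (u N - u 0) := by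
    intro N
    rw [← Finset.sum_sub_distrib, ← Finset.sum_range_sub u N, ← Finset.sum_add_distrib]
    exact Finset.sum_congr rfl (fun n _ => site n)
  -- boundary estimate
  have hbdry : 0 ≤ R 0 + (1/2*(Φ 0^2 - Psi z Φ 0^2) - u 0) := by
    have hb := boundary_Phi z hz0 hz1 Φ hb1 hb2
    have e1 : (-1 : ℤ) - ((0:ℕ) : ℤ) = -1 := by norm_num
    have e2 : (-2 : ℤ) - ((0:ℕ) : ℤ) = -2 := by norm_num
    have e3 : (0 : ℤ) - ((0:ℕ) : ℤ) = 0 := by norm_num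
    rw [hRdef, hu_def]
    simp only
    rw [e1, e2, e3]
    linarith [hb]
  -- finite-sum inequality
  have claim : ∀ N : ℕ,
      (∑ n ∈ Finset.range (N+1), Psi z Φ (-1 - (n:ℤ))^2) + 1/2 * Psi z Φ 0^2
        ≤ ((∑ n ∈ Finset.range (N+1), Φ (-1 - (n:ℤ))^2) + 1/2 * Φ 0^2) - u (N+1) := by
    intro N
    have hid := sum_id (N+1)
    have hsingle : R 0 ≤ ∑ n ∈ Finset.range (N+1), R n :=
      Finset.single_le_sum (fun n _ => hR0 n) (Finset.mem_range.mpr (Nat.succ_pos N))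
    linarith [hid, hsingle, hbdry]
  -- pass to the limit
  have tΨ : (∑' j : {j : ℤ // j ≤ -1}, (Psi z Φ j.1) ^ 2)
      = ∑' n : ℕ, Psi z Φ (-1 - (n:ℤ)) ^ 2 := by
    rw [← Equiv.tsum_eq negSuccEquiv (fun j : {j : ℤ // j ≤ -1} => (Psi z Φ j.1) ^ 2)]
    exact tsum_congr (fun n => rfl)
  have tΦ : (∑' j : {j : ℤ // j ≤ -1}, (Φ j.1) ^ 2)
      = ∑' n : ℕ, Φ (-1 - (n:ℤ)) ^ 2 := by
    rw [← Equiv.tsum_eq negSuccEquiv (fun j : {j : ℤ // j ≤ -1} => (Φ j.1) ^ 2)]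
    exact tsum_congr (fun n => rfl)
  rw [tΨ, tΦ]
  have hA : Filter.Tendsto (fun N : ℕ => (∑ n ∈ Finset.range (N+1), Psi z Φ (-1 - (n:ℤ))^2) + 1/2 * Psi z Φ 0^2)
      Filter.atTop (nhds ((∑' n : ℕ, Psi z Φ (-1 - (n:ℤ)) ^ 2) + 1/2 * Psi z Φ 0^2)) :=
    (hψs.hasSum.tendsto_sum_nat.comp (Filter.tendsto_add_atTop_nat 1)).add tendsto_const_nhds
  have hB : Filter.Tendsto (fun N : ℕ => ((∑ n ∈ Finset.range (N+1), Φ (-1 - (n:ℤ))^2) + 1/2 * Φ 0^2) - u (N+1))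
      Filter.atTop (nhds (((∑' n : ℕ, Φ (-1 - (n:ℤ)) ^ 2) + 1/2 * Φ 0^2) - 0)) :=
    ((hφs.hasSum.tendsto_sum_nat.comp (Filter.tendsto_add_atTop_nat 1)).add tendsto_const_nhds).sub
      (hu.comp (Filter.tendsto_add_atTop_nat 1))
  have := le_of_tendsto_of_tendsto' hA hB claim
  rw [sub_zero] at this
  convert this using 2
end
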